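/- arXiv:1110.3879 — 2 statements merged into one kernel-verified Lean document; each statement's English description precedes it below -/
import Mathlib

section
/- If a transformation sequence s' contains only edge rules and its length is strictly greater than the number of distinct edges of its union graph, then there exist two rules in s' acting on the same edge; consequently the map P₂ (removing the last such duplicated rule) is well-defined on such sequences. -/
/-- A transformation rule (TR): either a vertex rule (vi/vd/vr, distinguished by `kind`)
acting on a vertex ID `u`, or an edge rule (ei/ed/er) acting on a pair of vertex IDs,
with label `l` and interstate index `j`. -/
inductive Rule (V L : Type) where
  | vertex (kind : ℕ) (u : V) (l : L) (j : ℕ)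
  | edge   (kind : ℕ) (u u' : V) (l : L) (j : ℕ)

variable {V L : Type}

def Rule.isVertexRule : Rule V L → Prop
  | .vertex _ _ _ _ => True
  | .edge _ _ _ _ _ => False

def Rule.edgeOf : Rule V L → Option (V × V)
  | .vertex _ _ _ _ => none
  | .edge _ u u' _ _ => some (u, u')

/-- Translate a rule by a map `φ` on interstate indices and a map `ψ` on vertex IDs. -/
def mapRule (φ : ℕ → ℕ) (ψ : V → V) : Rule V L → Rule V L
  | .vertex k u l j => .vertex k (ψ u) l (φ j)
  | .edge k u u' l j => .edge k (ψ u) (ψ u') l (φ j)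

/-- `Subseq sp sd`: `sp ⊑ sd` via a strictly increasing map on interstate indices and an
injective map on vertex IDs. -/
def Subseq (sp sd : List (Rule V L)) : Prop :=
  ∃ φ : ℕ → ℕ, StrictMono φ ∧ ∃ ψ : V → V, Function.Injective ψ ∧
    ∀ r ∈ sp, mapRule φ ψ r ∈ sd

/-- Vertex IDs occurring in the rules of `s` (the vertex set of the union graph). -/
def vertsOf (s : List (Rule V L)) : Set V :=
  {u | (∃ k l j, Rule.vertex k u l j ∈ s) ∨ (∃ k u' l j, Rule.edge k u u' l j ∈ s) ∨
       (∃ k u' l j, Rule.edge k u' u l j ∈ s)}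

/-- Pairs of vertex IDs acted on by edge rules of `s` (the edge set of the union graph). -/
def edgePairs (s : List (Rule V L)) : Set (V × V) :=
  {p | ∃ k l j, Rule.edge k p.1 p.2 l j ∈ s}

/-- The union graph of a transformation sequence, as a simple graph on all of `V`. -/
def unionGraph (s : List (Rule V L)) : SimpleGraph V :=
  SimpleGraph.fromEdgeSet {e | ∃ p ∈ edgePairs s, e = Sym2.mk p.1 p.2}

/-- A transformation sequence is relevant iff its union graph (induced on its vertex IDs)
is connected. -/
def Relevant (s : List (Rule V L)) : Prop :=
  ((unionGraph s).induce (vertsOf s)).Connected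

/-- The support of a transformation sequence in a database of graph sequences, each
represented by its transformation sequence. -/
noncomputable def support (DB : Finset (ℕ × List (Rule V L))) (s : List (Rule V L)) : ℕ :=
  Set.ncard {gid | ∃ sd, (gid, sd) ∈ DB ∧ Subseq s sd}

lemma edgePairs_finite (s : List (Rule V L)) : (edgePairs s).Finite :=
  (s.filterMap Rule.edgeOf).finite_toSet.subset fun _ ⟨_, _, _, hm⟩ ↦
    List.mem_filterMap.2 ⟨_, hm, rfl⟩

lemma Rule.edgeOf_mem_image_edgePairs {s : List (Rule V L)} {r : Rule V L} (hr : r ∈ s)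
    (hv : ¬ r.isVertexRule) : r.edgeOf ∈ Option.some '' edgePairs s := by
  cases r with
  | vertex => exact absurd trivial hv
  | edge k u u' l j => exact ⟨(u, u'), ⟨k, l, j, hr⟩, rfl⟩

/-- pigeonhole: if a transformation sequence `s` contains only edge rules
and its length strictly exceeds the number of distinct edges of its union graph, then two
rules of `s` act on the same edge; hence `P₂` is well-defined on such sequences. -/
theorem exists_duplicated_edge_rule (s : List (Rule V L))
    (hedge : ∀ r ∈ s, ¬ r.isVertexRule)
    (hlen : (edgePairs s).ncard < s.length) :
    ∃ i j : Fin s.length, i ≠ j ∧ (s.get i).edgeOf = (s.get j).edgeOf := by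
  have hcard : (Option.some '' edgePairs s).ncard < (Set.univ : Set (Fin s.length)).ncard := by
    rwa [Set.ncard_image_of_injective _ (Option.some_injective _), Set.ncard_univ,
      Nat.card_fin]
  have hmaps : ∀ i ∈ (Set.univ : Set (Fin s.length)),
      (s.get i).edgeOf ∈ Option.some '' edgePairs s :=
    fun i _ ↦ Rule.edgeOf_mem_image_edgePairs (s.get_mem i) (hedge _ (s.get_mem i))
  obtain ⟨i, -, j, -, hne, heq⟩ :=
    Set.exists_ne_map_eq_of_ncard_lt_of_maps_to hcard hmaps ((edgePairs_finite s).image _)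
  exact ⟨i, j, hne, heq⟩
end

section
/- If s is a relevant transformation sequence and s' is obtained from s by removing the last vertex rule (operation P₁), then s' ⊑ s and the union graph of s' equals that of s, hence σ(s') ≥ σ(s) for any database. -/
variable {V L : Type}

/-!
Removing a vertex rule `r` on vertex `u` deletes no edge rule, so the edge set of the union graph
is unchanged, and the only vertex that could disappear is `u`. Since the union graph of a relevant
sequence is connected and the remaining rules still mention some vertex, either that vertex is `u`
or `u` has a neighbour, i.e. `u` is an endpoint of an edge rule that survives. Support is
antitone for `⊑` because `⊑` is transitive.
-/

theorem Rule.isVertexRule_iff {r : Rule V L} :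
    r.isVertexRule ↔ ∃ k u l j, r = .vertex k u l j := by
  cases r <;> simp [Rule.isVertexRule]

theorem mapRule_id (r : Rule V L) : mapRule id id r = r := by
  cases r <;> rfl

theorem mapRule_mapRule (φ φ' : ℕ → ℕ) (ψ ψ' : V → V) (r : Rule V L) :
    mapRule φ ψ (mapRule φ' ψ' r) = mapRule (φ ∘ φ') (ψ ∘ ψ') r := by
  cases r <;> rfl

theorem Subseq.of_subset {sp sd : List (Rule V L)} (h : sp ⊆ sd) : Subseq sp sd :=
  ⟨id, strictMono_id, id, Function.injective_id, fun r hr => (mapRule_id r).symm ▸ h hr⟩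

theorem Subseq.trans {s₁ s₂ s₃ : List (Rule V L)} (h₁₂ : Subseq s₁ s₂) (h₂₃ : Subseq s₂ s₃) :
    Subseq s₁ s₃ := by
  obtain ⟨φ, hφ, ψ, hψ, h⟩ := h₁₂
  obtain ⟨φ', hφ', ψ', hψ', h'⟩ := h₂₃
  exact ⟨φ' ∘ φ, hφ'.comp hφ, ψ' ∘ ψ, hψ'.comp hψ,
    fun r hr => mapRule_mapRule φ' φ ψ' ψ r ▸ h' _ (h r hr)⟩

theorem support_anti (DB : Finset (ℕ × List (Rule V L))) {s s' : List (Rule V L)}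
    (h : Subseq s' s) : support DB s ≤ support DB s' := by
  apply Set.ncard_le_ncard
  · rintro gid ⟨sd, hsd, hs⟩
    exact ⟨sd, hsd, h.trans hs⟩
  · refine (DB.image Prod.fst).finite_toSet.subset ?_
    rintro gid ⟨sd, hsd, -⟩
    exact Finset.mem_image_of_mem Prod.fst hsd

theorem vertsOf_nonempty {s : List (Rule V L)} (hs : s ≠ []) : (vertsOf s).Nonempty := by
  obtain ⟨r, hr⟩ := List.exists_mem_of_ne_nil s hs
  cases r with
  | vertex k u l j => exact ⟨u, Or.inl ⟨k, l, j, hr⟩⟩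
  | edge k u u' l j => exact ⟨u, Or.inr (Or.inl ⟨k, u', l, j, hr⟩)⟩

theorem mem_vertsOf_of_adj {s : List (Rule V L)} {u w : V} (h : (unionGraph s).Adj u w) :
    u ∈ vertsOf s := by
  obtain ⟨⟨p, ⟨k, l, j, hp⟩, hup⟩, -⟩ := SimpleGraph.fromEdgeSet_adj _ |>.mp h
  rcases Sym2.mem_iff.mp (hup ▸ Sym2.mem_mk_left u w) with rfl | rfl
  · exact Or.inr (Or.inl ⟨k, p.2, l, j, hp⟩)
  · exact Or.inr (Or.inr ⟨k, p.1, l, j, hp⟩)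

theorem Relevant.exists_adj {s : List (Rule V L)} (h : Relevant s) {u v : V}
    (hu : u ∈ vertsOf s) (hv : v ∈ vertsOf s) (huv : u ≠ v) :
    ∃ w, (unionGraph s).Adj u w := by
  obtain ⟨p⟩ := h.preconnected ⟨u, hu⟩ ⟨v, hv⟩
  have hp : ¬ p.Nil := SimpleGraph.Walk.not_nil_of_ne (by simpa using huv)
  exact ⟨p.snd.1, p.adj_snd hp⟩

theorem edgePairs_append_cons_vertex (s₁ s₂ : List (Rule V L)) (k : ℕ) (u : V) (l : L) (j : ℕ) :
    edgePairs (s₁ ++ .vertex k u l j :: s₂) = edgePairs (s₁ ++ s₂) := by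
  ext p
  simp [edgePairs]

theorem unionGraph_append_cons_vertex (s₁ s₂ : List (Rule V L)) (k : ℕ) (u : V) (l : L) (j : ℕ) :
    unionGraph (s₁ ++ .vertex k u l j :: s₂) = unionGraph (s₁ ++ s₂) := by
  rw [unionGraph, unionGraph, edgePairs_append_cons_vertex]

theorem vertsOf_append_cons_vertex (s₁ s₂ : List (Rule V L)) (k : ℕ) (u : V) (l : L) (j : ℕ) :
    vertsOf (s₁ ++ .vertex k u l j :: s₂) = insert u (vertsOf (s₁ ++ s₂)) := by
  ext w
  simp only [vertsOf, Set.mem_ofPred_eq, Set.mem_insert_iff, List.mem_append, List.mem_cons,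
    reduceCtorEq, false_or, Rule.vertex.injEq]
  grind

theorem Relevant.vertsOf_append_eq {s₁ s₂ : List (Rule V L)} {k : ℕ} {u : V} {l : L} {j : ℕ}
    (h : Relevant (s₁ ++ .vertex k u l j :: s₂)) (hne : s₁ ++ s₂ ≠ []) :
    vertsOf (s₁ ++ s₂) = vertsOf (s₁ ++ .vertex k u l j :: s₂) := by
  have hverts := vertsOf_append_cons_vertex s₁ s₂ k u l j
  rw [hverts]
  obtain ⟨v, hv⟩ := vertsOf_nonempty hne
  by_cases huv : u = v
  · rw [Set.insert_eq_of_mem (huv ▸ hv)]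
  obtain ⟨w, hw⟩ := h.exists_adj (hverts ▸ Set.mem_insert u _)
    (hverts ▸ Set.mem_insert_of_mem u hv) huv
  rw [unionGraph_append_cons_vertex] at hw
  rw [Set.insert_eq_of_mem (mem_vertsOf_of_adj hw)]

theorem P1_subseq_and_support_general (s₁ s₂ : List (Rule V L)) (r : Rule V L)
    (hr : r.isVertexRule)
    (hrel : Relevant (s₁ ++ r :: s₂)) (hlen : 1 < (s₁ ++ r :: s₂).length) :
    Subseq (s₁ ++ s₂) (s₁ ++ r :: s₂) ∧
    vertsOf (s₁ ++ s₂) = vertsOf (s₁ ++ r :: s₂) ∧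
    edgePairs (s₁ ++ s₂) = edgePairs (s₁ ++ r :: s₂) ∧
    ∀ DB : Finset (ℕ × List (Rule V L)),
      support DB (s₁ ++ r :: s₂) ≤ support DB (s₁ ++ s₂) := by
  obtain ⟨k, u, l, j, rfl⟩ := Rule.isVertexRule_iff.mp hr
  have hne : s₁ ++ s₂ ≠ [] := List.ne_nil_of_length_pos <| by
    simp only [List.length_append, List.length_cons] at hlen ⊢; omega
  have hsub : Subseq (s₁ ++ s₂) (s₁ ++ .vertex k u l j :: s₂) :=
    .of_subset ((List.sublist_cons_self _ s₂).append_left s₁).subset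
  exact ⟨hsub, hrel.vertsOf_append_eq hne,
    (edgePairs_append_cons_vertex s₁ s₂ k u l j).symm, fun DB => support_anti DB hsub⟩

/-- if `s = s₁ ++ r :: s₂` is a relevant transformation sequence (of length
greater than 1, as required for `P₁`) and `s' = s₁ ++ s₂` is obtained from `s` by removing
its last vertex rule `r` (operation `P₁`), then `s' ⊑ s` and the union graph of `s'`
equals that of `s`; hence `σ(s') ≥ σ(s)` for any database. -/
theorem P1_subseq_and_support (s₁ s₂ : List (Rule V L)) (r : Rule V L)
    (hr : r.isVertexRule) (hlast : ∀ r' ∈ s₂, ¬ r'.isVertexRule)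
    (hrel : Relevant (s₁ ++ r :: s₂)) (hlen : 1 < (s₁ ++ r :: s₂).length) :
    Subseq (s₁ ++ s₂) (s₁ ++ r :: s₂) ∧
    vertsOf (s₁ ++ s₂) = vertsOf (s₁ ++ r :: s₂) ∧
    edgePairs (s₁ ++ s₂) = edgePairs (s₁ ++ r :: s₂) ∧
    ∀ DB : Finset (ℕ × List (Rule V L)),
      support DB (s₁ ++ r :: s₂) ≤ support DB (s₁ ++ s₂) :=
  P1_subseq_and_support_general s₁ s₂ r hr hrel hlen
end
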